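/- For a 2-level quantum system with Hamiltonian H (Hermitian, 2×2) with eigenvalues E₀ < E₁, if ψ is a unit vector and exp(-iTH)ψ is orthogonal to ψ for some T > 0, then T ≥ π/(E₁ - E₀), with equality achievable when ψ is an equal superposition of eigenstates. -/

import Mathlib

/-!
In the eigenbasis of `H` the survival amplitude `⟨ψ, exp (-iTH) ψ⟩` is the convex combination
`p e^{-iTE₀} + q e^{-iTE₁}` of two unit phases, with weights `p, q` the populations of the
eigenstates. It can vanish only if `p = q = 1/2` and the phases are opposite, i.e.
`e^{iT(E₁ - E₀)} = -1`, which forces `T (E₁ - E₀) ≥ π`. The equal superposition of the two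
eigenstates attains this bound.
-/

open Matrix

namespace Complex

theorem pi_le_of_exp_ofReal_mul_I_eq_neg_one {θ : ℝ} (hθ : 0 < θ)
    (h : exp (θ * I) = -1) : Real.pi ≤ θ := by
  have hcos : Real.cos θ = -1 := by rw [← exp_ofReal_mul_I_re, h, neg_re, one_re]
  by_contra! hlt
  have := Real.cos_lt_cos_of_nonneg_of_le_pi hθ.le le_rfl hlt
  rw [Real.cos_pi, hcos] at this
  exact lt_irrefl _ this

theorem eq_neg_of_ofReal_mul_add_ofReal_mul_eq_zero {p q : ℝ} {u v : ℂ}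
    (hpq : p + q = 1) (hu : ‖u‖ = 1) (hv : ‖v‖ = 1) (h : (p : ℂ) * u + q * v = 0) :
    u = -v := by
  have habs : |p| = |q| := by
    simpa [hu, hv] using congrArg norm (eq_neg_of_add_eq_zero_left h)
  have hp : p = 1 / 2 := by
    rcases abs_eq_abs.mp habs with hpq' | hpq' <;> linarith
  have hq : q = 1 / 2 := by linarith
  rw [hp, hq] at h
  push_cast at h
  linear_combination 2 * h

theorem pi_le_mul_sub_of_weighted_phases_eq_zero {p q a b T : ℝ} (hpq : p + q = 1)
    (hab : a < b) (hT : 0 < T)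
    (h : (p : ℂ) * exp (-(T : ℂ) * I * a) + q * exp (-(T : ℂ) * I * b) = 0) :
    Real.pi ≤ T * (b - a) := by
  have hphase (x : ℝ) : -(T : ℂ) * I * x = ((-(T * x) : ℝ) : ℂ) * I := by push_cast; ring
  rw [hphase, hphase] at h
  have huv := eq_neg_of_ofReal_mul_add_ofReal_mul_eq_zero hpq
    (norm_exp_ofReal_mul_I _) (norm_exp_ofReal_mul_I _) h
  refine pi_le_of_exp_ofReal_mul_I_eq_neg_one (mul_pos hT (sub_pos.2 hab)) ?_
  rw [show ((T * (b - a) : ℝ) : ℂ) * I = ((-(T * a) : ℝ) : ℂ) * I - ((-(T * b) : ℝ) : ℂ) * I by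
      push_cast; ring, exp_sub, huv, neg_div, div_self (exp_ne_zero _)]

end Complex

namespace Matrix.IsHermitian

variable {n : Type*} [Fintype n] [DecidableEq n] {A : Matrix n n ℂ} (hA : A.IsHermitian)

theorem exp_smul_eq (c : ℂ) :
    NormedSpace.exp (c • A) = (hA.eigenvectorUnitary : Matrix n n ℂ) *
      diagonal (fun i => Complex.exp (c * hA.eigenvalues i)) *
      star (hA.eigenvectorUnitary : Matrix n n ℂ) := by
  set U : Matrix n n ℂ := (hA.eigenvectorUnitary : Matrix n n ℂ)
  have hUinv : U⁻¹ = star U := inv_eq_left_inv (Unitary.coe_star_mul_self _)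
  have hU : IsUnit U := (Unitary.toUnits hA.eigenvectorUnitary).isUnit
  have hdiag : c • A = U * diagonal (fun i => c * (hA.eigenvalues i : ℂ)) * U⁻¹ := by
    have : diagonal (fun i => c * (hA.eigenvalues i : ℂ)) =
        c • diagonal (RCLike.ofReal ∘ hA.eigenvalues) := by rw [← diagonal_smul]; rfl
    conv_lhs => rw [hA.spectral_theorem]
    rw [hUinv, Unitary.conjStarAlgAut_apply, this, Matrix.mul_smul, Matrix.smul_mul]
  rw [hdiag, exp_conj U _ hU, exp_diagonal, hUinv]
  congr 3
  funext i
  exact (Pi.coe_exp _ i).trans (congrFun Complex.exp_eq_exp_ℂ _).symm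

theorem star_dotProduct_exp_smul_mulVec (c : ℂ) (ψ : n → ℂ) :
    star ψ ⬝ᵥ NormedSpace.exp (c • A) *ᵥ ψ =
      ∑ i, (Complex.normSq ((star (hA.eigenvectorUnitary : Matrix n n ℂ) *ᵥ ψ) i) : ℂ) *
        Complex.exp (c * hA.eigenvalues i) := by
  rw [hA.exp_smul_eq, ← mulVec_mulVec, ← mulVec_mulVec, dotProduct_mulVec]
  set U : Matrix n n ℂ := (hA.eigenvectorUnitary : Matrix n n ℂ)
  set w := star U *ᵥ ψ
  have hw : star ψ ᵥ* U = star w := by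
    rw [star_mulVec]; exact congrArg _ (conjTranspose_conjTranspose U).symm
  rw [hw]
  refine Finset.sum_congr rfl fun i _ => ?_
  rw [mulVec_diagonal, Pi.star_apply, RCLike.star_def, ← Complex.mul_conj]
  ring

theorem star_dotProduct_self_eq_sum_normSq (ψ : n → ℂ) :
    star ψ ⬝ᵥ ψ =
      ∑ i, (Complex.normSq ((star (hA.eigenvectorUnitary : Matrix n n ℂ) *ᵥ ψ) i) : ℂ) := by
  simpa using hA.star_dotProduct_exp_smul_mulVec 0 ψ

noncomputable def eigenSuperposition (i j : n) : n → ℂ :=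
  (((√2)⁻¹ : ℝ) : ℂ) • (⇑(hA.eigenvectorBasis i) + ⇑(hA.eigenvectorBasis j))

theorem star_eigenvectorUnitary_mulVec_eigenSuperposition (i j : n) :
    star (hA.eigenvectorUnitary : Matrix n n ℂ) *ᵥ hA.eigenSuperposition i j =
      (((√2)⁻¹ : ℝ) : ℂ) • (Pi.single i 1 + Pi.single j 1) := by
  rw [eigenSuperposition, mulVec_smul, mulVec_add, star_eigenvectorUnitary_mulVec,
    star_eigenvectorUnitary_mulVec]

theorem star_dotProduct_exp_smul_mulVec_eigenSuperposition {i j : n} (hij : i ≠ j) (c : ℂ) :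
    star (hA.eigenSuperposition i j) ⬝ᵥ
        NormedSpace.exp (c • A) *ᵥ hA.eigenSuperposition i j =
      (Complex.exp (c * hA.eigenvalues i) + Complex.exp (c * hA.eigenvalues j)) / 2 := by
  rw [hA.star_dotProduct_exp_smul_mulVec, star_eigenvectorUnitary_mulVec_eigenSuperposition,
    Fintype.sum_eq_add i j hij]
  · simp [hij, hij.symm]
    ring
  · rintro k ⟨hki, hkj⟩
    simp [hki, hkj]

theorem star_eigenSuperposition_dotProduct_self {i j : n} (hij : i ≠ j) :
    star (hA.eigenSuperposition i j) ⬝ᵥ hA.eigenSuperposition i j = 1 := by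
  simpa using hA.star_dotProduct_exp_smul_mulVec_eigenSuperposition hij 0

theorem star_dotProduct_exp_smul_mulVec_eigenSuperposition_eq_zero {i j : n}
    (hne : hA.eigenvalues i ≠ hA.eigenvalues j) :
    star (hA.eigenSuperposition i j) ⬝ᵥ
        NormedSpace.exp ((-((Real.pi / (hA.eigenvalues j - hA.eigenvalues i) : ℝ) : ℂ) *
          Complex.I) • A) *ᵥ hA.eigenSuperposition i j = 0 := by
  have hij : i ≠ j := fun h => hne (congrArg _ h)
  rw [star_dotProduct_exp_smul_mulVec_eigenSuperposition hA hij]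
  have hgap : ((hA.eigenvalues j - hA.eigenvalues i : ℝ) : ℂ) ≠ 0 :=
    Complex.ofReal_ne_zero.2 (sub_ne_zero.2 hne.symm)
  have hshift : -((Real.pi / (hA.eigenvalues j - hA.eigenvalues i) : ℝ) : ℂ) * Complex.I *
        hA.eigenvalues j =
      -((Real.pi / (hA.eigenvalues j - hA.eigenvalues i) : ℝ) : ℂ) * Complex.I *
        hA.eigenvalues i + -(Real.pi * Complex.I) := by
    push_cast at hgap ⊢
    field_simp
    ring
  rw [hshift, Complex.exp_add, Complex.exp_neg_pi_mul_I]
  ring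

end Matrix.IsHermitian

/-- Quantum speed limit for a two-level system: if `H` is Hermitian with eigenvalues
`E₀ < E₁` and a unit state `ψ` is orthogonalized by `exp (-iTH)` at time `T > 0`, then
`T ≥ π / (E₁ - E₀)`; moreover equality is achievable by some unit state at
`T = π / (E₁ - E₀)`. -/
theorem two_level_orthogonalization_time
    (H : Matrix (Fin 2) (Fin 2) ℂ) (hH : H.IsHermitian)
    (E0 E1 : ℝ) (hlt : E0 < E1)
    (hE0 : hH.eigenvalues 0 = E0) (hE1 : hH.eigenvalues 1 = E1)
    (ψ : Fin 2 → ℂ) (hψ : dotProduct (star ψ) ψ = 1)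
    (T : ℝ) (hT : 0 < T)
    (horth : dotProduct (star ψ)
      ((NormedSpace.exp (((-(T : ℂ)) * Complex.I) • H)).mulVec ψ) = 0) :
    T ≥ Real.pi / (E1 - E0) ∧
      ∃ φ : Fin 2 → ℂ, dotProduct (star φ) φ = 1 ∧
        dotProduct (star φ)
          ((NormedSpace.exp
            (((-(Real.pi / (E1 - E0) : ℝ) : ℂ)) • (Complex.I • H))).mulVec φ) = 0 := by
  subst hE0 hE1
  constructor
  · set w := star (hH.eigenvectorUnitary : Matrix (Fin 2) (Fin 2) ℂ) *ᵥ ψ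
    have hweights : Complex.normSq (w 0) + Complex.normSq (w 1) = 1 := by
      have := hH.star_dotProduct_self_eq_sum_normSq ψ
      rw [hψ, Fin.sum_univ_two] at this
      exact_mod_cast this.symm
    have hcancel := hH.star_dotProduct_exp_smul_mulVec (-(T : ℂ) * Complex.I) ψ
    rw [horth, Fin.sum_univ_two] at hcancel
    rw [ge_iff_le, div_le_iff₀ (sub_pos.2 hlt)]
    exact Complex.pi_le_mul_sub_of_weighted_phases_eq_zero hweights hlt hT hcancel.symm
  · refine ⟨hH.eigenSuperposition 0 1, hH.star_eigenSuperposition_dotProduct_self zero_ne_one, ?_⟩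
    rw [smul_smul]
    exact hH.star_dotProduct_exp_smul_mulVec_eigenSuperposition_eq_zero hlt.ne
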